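/- Let anti-commuting fermion generators φ_n, φ*_n (n ∈ ℤ + 1/2) satisfy [φ_n, φ_m]_+ = 0, [φ*_n, φ*_m]_+ = 0, [φ*_n, φ_m]_+ = δ_{n+m,0}. Then the elements a_k := Σ_{j ∈ ℤ+1/2} :φ_{−j} φ*_{j+k}: (normal ordered, acting on the fermionic Fock space) satisfy the Heisenberg relations [a_n, a_m] = n δ_{n+m,0}. -/
import Mathlib

private lemma key_ring {R : Type*} [Ring R] (x y u w d1 d2 : R)
    (h1 : y*u + u*y = d1) (h2 : x*u + u*x = 0) (h3 : y*w + w*y = 0) (h4 : w*x + x*w = d2)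
    (hc1 : ∀ z, d1*z = z*d1) (hc2 : ∀ z, d2*z = z*d2) :
    (x*y)*(u*w) - (u*w)*(x*y) = d1*(x*w) - d2*(u*y) := by
  have hyu : y*u = d1 - u*y := eq_sub_of_add_eq h1
  have hxu : x*u = -(u*x) := eq_neg_of_add_eq_zero_left h2
  have hyw : y*w = -(w*y) := eq_neg_of_add_eq_zero_left h3
  have hwx : w*x = d2 - x*w := eq_sub_of_add_eq h4
  have e1 : (x*y)*(u*w) = d1*(x*w) - u*(x*w)*y := by
    calc (x*y)*(u*w) = x*(y*u)*w := by noncomm_ring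
    _ = x*(d1 - u*y)*w := by rw [hyu]
    _ = x*d1*w - (x*u)*(y*w) := by noncomm_ring
    _ = x*d1*w - (-(u*x))*(-(w*y)) := by rw [hxu, hyw]
    _ = (x*d1)*w - u*(x*w)*y := by noncomm_ring
    _ = d1*(x*w) - u*(x*w)*y := by rw [← hc1 x, mul_assoc]
  have e2 : (u*w)*(x*y) = d2*(u*y) - u*(x*w)*y := by
    calc (u*w)*(x*y) = u*(w*x)*y := by noncomm_ring
    _ = u*(d2 - x*w)*y := by rw [hwx]
    _ = (u*d2)*y - u*(x*w)*y := by noncomm_ring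
    _ = d2*(u*y) - u*(x*w)*y := by rw [← hc2 u, mul_assoc]
  rw [e1, e2]; abel

private lemma key_sub {R : Type*} [Ring R] (A B c d : R) (hc : ∀ z, c*z = z*c) (hd : ∀ z, d*z = z*d) :
    (A - c)*(B - d) - (B - d)*(A - c) = A*B - B*A := by
  have e : (A - c)*(B - d) - (B - d)*(A - c)
      = A*B - A*d - c*B + c*d - (B*A - B*c - d*A + d*c) := by noncomm_ring
  rw [e, hc B, hd A, hc d]; abel

private def Eop {V : Type*} [AddCommGroup V] [Module ℂ V] (φ ψ : ℤ → Module.End ℂ V)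
    (k i : ℤ) : Module.End ℂ V :=
  if 0 ≤ i + k then φ (-i - 1) * ψ (i + k) else -(ψ (i + k) * φ (-i - 1))

private lemma commE {V : Type*} [AddCommGroup V] [Module ℂ V] (φ ψ : ℤ → Module.End ℂ V)
    (hφφ : ∀ i j : ℤ, φ i * φ j + φ j * φ i = 0)
    (hψψ : ∀ i j : ℤ, ψ i * ψ j + ψ j * ψ i = 0)
    (hψφ : ∀ i j : ℤ, ψ i * φ j + φ j * ψ i = if i + j + 1 = 0 then 1 else 0)
    (n m i j : ℤ) :
    Eop φ ψ n i * Eop φ ψ m j - Eop φ ψ m j * Eop φ ψ n i =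
      (if j = i + n then φ (-i - 1) * ψ (i + n + m) else 0)
        - (if j = i - m then φ (-j - 1) * ψ (j + n + m) else 0) := by
  have hcen : ∀ (P : Prop) [Decidable P] (z : Module.End ℂ V),
      (if P then (1 : Module.End ℂ V) else 0) * z = z * (if P then 1 else 0) := by
    intro P _ z; split <;> simp
  have hEeq : ∀ k i' : ℤ, Eop φ ψ k i' =
      φ (-i' - 1) * ψ (i' + k) - (if 0 ≤ i' + k then 0 else if k = 0 then 1 else 0) := by
    intro k i'
    unfold Eop
    split_ifs with h h2
    · simp
    · -- -(ψ * φ) = φ * ψ - 1, since ψφ + φψ = 1 here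
      have h1 := hψφ (i' + k) (-i' - 1)
      rw [if_pos (by omega)] at h1
      rw [eq_sub_of_add_eq h1, neg_sub]
    · have h1 := hψφ (i' + k) (-i' - 1)
      rw [if_neg (by omega)] at h1
      rw [eq_neg_of_add_eq_zero_left h1, sub_zero, neg_neg]
  rw [hEeq n i, hEeq m j]
  have hc : ∀ z, (if 0 ≤ i + n then (0:Module.End ℂ V) else if n = 0 then 1 else 0) * z
      = z * (if 0 ≤ i + n then 0 else if n = 0 then 1 else 0) := by
    intro z; split_ifs <;> simp
  have hd : ∀ z, (if 0 ≤ j + m then (0:Module.End ℂ V) else if m = 0 then 1 else 0) * z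
      = z * (if 0 ≤ j + m then 0 else if m = 0 then 1 else 0) := by
    intro z; split_ifs <;> simp
  rw [key_sub _ _ _ _ hc hd]
  rw [key_ring (φ (-i-1)) (ψ (i+n)) (φ (-j-1)) (ψ (j+m))
      (if (i+n) + (-j-1) + 1 = 0 then 1 else 0) (if (j+m) + (-i-1) + 1 = 0 then 1 else 0)
      (hψφ (i+n) (-j-1)) (hφφ (-i-1) (-j-1)) (hψψ (i+n) (j+m)) (hψφ (j+m) (-i-1))
      (fun z => hcen _ z) (fun z => hcen _ z)]
  congr 1
  · by_cases h : j = i + n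
    · subst h
      rw [if_pos (by omega), if_pos rfl, one_mul]
    · rw [if_neg (by omega), if_neg h, zero_mul]
  · by_cases h : j = i - m
    · have hie : i + n = j + n + m := by omega
      rw [hie, if_pos (by omega), one_mul, if_pos h]
    · rw [if_neg (by omega), zero_mul, if_neg h]



/-- Fermions `φ_n, φ*_n` (`n ∈ ℤ + 1/2`, encoded by `n = i + 1/2` for
`i : ℤ`) acting on the fermionic Fock space satisfy the Clifford relations
`[φ_n, φ_m]₊ = 0`, `[φ*_n, φ*_m]₊ = 0`, `[φ*_n, φ_m]₊ = δ_{n+m,0}`, together with the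
local-finiteness of the Fock space action (each vector is annihilated by all `φ_n, φ*_n`
with `n` sufficiently large).  Then the normal-ordered bilinears
`a k = ∑_{j ∈ ℤ+1/2} :φ_{-j} φ*_{j+k}:` (whose value on each vector is given by any
sufficiently large finite partial sum; `:φ_{-j}φ*_{j+k}: = φ_{-j}φ*_{j+k}` if `j+k > 0`
and `= -φ*_{j+k}φ_{-j}` otherwise) satisfy the Heisenberg relations
`[a n, a m] = n δ_{n+m,0}`. -/
theorem boson_from_fermion_heisenberg
    (V : Type*) [AddCommGroup V] [Module ℂ V]
    (φ ψ : ℤ → Module.End ℂ V)  -- `φ i = φ_{i+1/2}`, `ψ i = φ*_{i+1/2}`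
    (hφφ : ∀ i j : ℤ, φ i * φ j + φ j * φ i = 0)
    (hψψ : ∀ i j : ℤ, ψ i * ψ j + ψ j * ψ i = 0)
    (hψφ : ∀ i j : ℤ, ψ i * φ j + φ j * ψ i = if i + j + 1 = 0 then 1 else 0)
    (hann : ∀ v : V, ∃ N : ℕ, ∀ i : ℤ, (N : ℤ) ≤ i → φ i v = 0 ∧ ψ i v = 0)
    (a : ℤ → Module.End ℂ V)
    (ha : ∀ (k : ℤ) (v : V), ∃ N : ℕ, ∀ M : ℕ, N ≤ M →
      a k v = ∑ i ∈ Finset.Icc (-(M : ℤ)) (M : ℤ),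
        (if 0 ≤ i + k then φ (-i - 1) * ψ (i + k)
         else -(ψ (i + k) * φ (-i - 1))) v) :
    ∀ (n m : ℤ) (v : V),
      a n (a m v) - a m (a n v) = if n + m = 0 then (n : ℂ) • v else 0 := by
  have hsum : ∀ (k : ℤ) (w : V), ∃ N : ℕ, ∀ M : ℕ, N ≤ M →
      a k w = ∑ i ∈ Finset.Icc (-(M : ℤ)) (M : ℤ), Eop φ ψ k i w := ha
  intro n m v
  obtain ⟨N₀, hN₀⟩ := hann v
  obtain ⟨N₁, hN₁⟩ := hsum m v
  obtain ⟨N₃, hN₃⟩ := hsum n v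
  obtain ⟨N₂, hN₂⟩ := hsum n (a m v)
  obtain ⟨N₄, hN₄⟩ := hsum m (a n v)
  set M : ℕ := N₀ + N₁ + N₂ + N₃ + N₄ + 2 * (n.natAbs + m.natAbs) + 1 with hM
  have hMn₁ : a m v = ∑ j ∈ Finset.Icc (-(M : ℤ)) (M : ℤ), Eop φ ψ m j v := hN₁ M (by omega)
  have hMn₃ : a n v = ∑ j ∈ Finset.Icc (-(M : ℤ)) (M : ℤ), Eop φ ψ n j v := hN₃ M (by omega)
  -- the double-sum expressions
  have step1 : a n (a m v) = ∑ i ∈ Finset.Icc (-(M : ℤ)) (M : ℤ),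
      ∑ j ∈ Finset.Icc (-(M : ℤ)) (M : ℤ), (Eop φ ψ n i * Eop φ ψ m j) v := by
    rw [hN₂ M (by omega)]
    refine Finset.sum_congr rfl fun i _ => ?_
    rw [hMn₁, map_sum]
    exact Finset.sum_congr rfl fun j _ => (Module.End.mul_apply _ _ _).symm
  have step2 : a m (a n v) = ∑ i ∈ Finset.Icc (-(M : ℤ)) (M : ℤ),
      ∑ j ∈ Finset.Icc (-(M : ℤ)) (M : ℤ), (Eop φ ψ m j * Eop φ ψ n i) v := by
    have h0 : a m (a n v) = ∑ j ∈ Finset.Icc (-(M : ℤ)) (M : ℤ),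
        ∑ i ∈ Finset.Icc (-(M : ℤ)) (M : ℤ), (Eop φ ψ m j * Eop φ ψ n i) v := by
      rw [hN₄ M (by omega)]
      refine Finset.sum_congr rfl fun j _ => ?_
      rw [hMn₃, map_sum]
      exact Finset.sum_congr rfl fun i _ => (Module.End.mul_apply _ _ _).symm
    rw [h0]; exact Finset.sum_comm
  -- basic vanishing facts
  have hGtop : ∀ i : ℤ, (N₀ : ℤ) ≤ i + n + m → φ (-i - 1) (ψ (i + n + m) v) = 0 := by
    intro i hi
    rw [(hN₀ (i + n + m) hi).2, map_zero]
  have hGbot : ∀ i : ℤ, i ≤ -(N₀ : ℤ) - 1 →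
      φ (-i - 1) (ψ (i + n + m) v) = if n + m = 0 then v else 0 := by
    intro i hi
    have h2 : φ (-i - 1) v = 0 := (hN₀ (-i - 1) (by omega)).1
    have h1 := congrArg (fun f : Module.End ℂ V => f v) (hψφ (i + n + m) (-i - 1))
    simp only [LinearMap.add_apply, Module.End.mul_apply, h2, map_zero, zero_add] at h1
    rw [h1]
    have hcond : (i + n + m + (-i - 1) + 1 = 0) ↔ (n + m = 0) := by omega
    rw [if_congr hcond rfl rfl]
    split_ifs <;> simp
  -- commutator as a difference of two interval sums
  have hcomm : a n (a m v) - a m (a n v) =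
      (∑ i ∈ Finset.Ioc (-(M : ℤ) + max 0 (-n) - 1) ((M : ℤ) - max 0 n),
        φ (-i - 1) (ψ (i + n + m) v))
      - (∑ i ∈ Finset.Ioc (-(M : ℤ) + max 0 (-m) - 1) ((M : ℤ) - max 0 m),
        φ (-i - 1) (ψ (i + n + m) v)) := by
    rw [step1, step2, ← Finset.sum_sub_distrib]
    have e1 : ∀ i ∈ Finset.Icc (-(M : ℤ)) (M : ℤ),
        (∑ j ∈ Finset.Icc (-(M : ℤ)) (M : ℤ), (Eop φ ψ n i * Eop φ ψ m j) v)
          - (∑ j ∈ Finset.Icc (-(M : ℤ)) (M : ℤ), (Eop φ ψ m j * Eop φ ψ n i) v)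
        = (if i + n ∈ Finset.Icc (-(M : ℤ)) (M : ℤ) then φ (-i - 1) (ψ (i + n + m) v) else 0)
          - (if i - m ∈ Finset.Icc (-(M : ℤ)) (M : ℤ)
              then φ (-(i - m) - 1) (ψ ((i - m) + n + m) v) else 0) := by
      intro i _
      rw [← Finset.sum_sub_distrib]
      have e2 : ∀ j ∈ Finset.Icc (-(M : ℤ)) (M : ℤ),
          (Eop φ ψ n i * Eop φ ψ m j) v - (Eop φ ψ m j * Eop φ ψ n i) v
          = (if j = i + n then φ (-i - 1) (ψ (i + n + m) v) else 0)
            - (if j = i - m then φ (-j - 1) (ψ (j + n + m) v) else 0) := by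
        intro j _
        rw [← LinearMap.sub_apply, commE φ ψ hφφ hψψ hψφ n m i j]
        simp [apply_ite (fun f : Module.End ℂ V => f v)]
      rw [Finset.sum_congr rfl e2, Finset.sum_sub_distrib,
        Finset.sum_ite_eq' _ (i + n) (fun _ => φ (-i - 1) (ψ (i + n + m) v)),
        Finset.sum_ite_eq' _ (i - m) (fun j => φ (-j - 1) (ψ (j + n + m) v))]
    rw [Finset.sum_congr rfl e1, Finset.sum_sub_distrib]
    congr 1
    · rw [← Finset.sum_filter]
      refine Finset.sum_congr ?_ fun _ _ => rfl
      ext x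
      simp only [Finset.mem_filter, Finset.mem_Icc, Finset.mem_Ioc]
      omega
    · rw [← Finset.sum_filter]
      have hset : (Finset.Icc (-(M : ℤ)) (M : ℤ)).filter
            (fun i => i - m ∈ Finset.Icc (-(M : ℤ)) (M : ℤ))
          = Finset.map (addRightEmbedding m)
              (Finset.Ioc (-(M : ℤ) + max 0 (-m) - 1) ((M : ℤ) - max 0 m)) := by
        ext x
        simp only [Finset.mem_filter, Finset.mem_Icc, Finset.mem_map,
          addRightEmbedding_apply, Finset.mem_Ioc]
        constructor
        · rintro ⟨h1, h2⟩; exact ⟨x - m, by omega, by omega⟩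
        · rintro ⟨a2, ha2, rfl⟩; omega
      rw [hset, Finset.sum_map]
      simp only [addRightEmbedding_apply, add_sub_cancel_right]
  rw [hcomm]
  -- now evaluate the difference of interval sums
  have hsplit : ∀ {p q r : ℤ}, p ≤ q → q ≤ r →
      (∑ i ∈ Finset.Ioc p r, φ (-i - 1) (ψ (i + n + m) v))
      = (∑ i ∈ Finset.Ioc p q, φ (-i - 1) (ψ (i + n + m) v))
        + (∑ i ∈ Finset.Ioc q r, φ (-i - 1) (ψ (i + n + m) v)) := by
    intro p q r h1 h2
    rw [← Finset.Ioc_union_Ioc_eq_Ioc h1 h2, Finset.sum_union]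
    rw [Finset.disjoint_left]
    intro x hx hx'
    simp only [Finset.mem_Ioc] at hx hx'
    omega
  have hconst : ∀ p q : ℤ, q ≤ -(N₀ : ℤ) - 1 →
      (∑ i ∈ Finset.Ioc p q, φ (-i - 1) (ψ (i + n + m) v))
      = (q - p).toNat • (if n + m = 0 then v else 0) := by
    intro p q h
    rw [Finset.sum_congr rfl (fun i hi => hGbot i (by
      simp only [Finset.mem_Ioc] at hi; omega)), Finset.sum_const, Int.card_Ioc]
  have hzero : ∀ p q : ℤ, (N₀ : ℤ) ≤ p + 1 + n + m →
      (∑ i ∈ Finset.Ioc p q, φ (-i - 1) (ψ (i + n + m) v)) = 0 := by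
    intro p q h
    refine Finset.sum_eq_zero fun i hi => hGtop i ?_
    simp only [Finset.mem_Ioc] at hi; omega
  set A₁ : ℤ := -(M : ℤ) + max 0 (-n) - 1 with hA₁
  set B₁ : ℤ := (M : ℤ) - max 0 n with hB₁
  set A₂ : ℤ := -(M : ℤ) + max 0 (-m) - 1 with hA₂
  set B₂ : ℤ := (M : ℤ) - max 0 m with hB₂
  set c : ℤ := -(N₀ : ℤ) - 1 with hc
  have o1 : A₁ ≤ c := by omega
  have o2 : c ≤ B₁ := by omega
  have o3 : A₂ ≤ c := by omega
  have o4 : c ≤ B₂ := by omega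
  rw [hsplit o1 o2, hsplit o3 o4]
  have htop : (∑ i ∈ Finset.Ioc c B₁, φ (-i - 1) (ψ (i + n + m) v))
      = (∑ i ∈ Finset.Ioc c B₂, φ (-i - 1) (ψ (i + n + m) v)) := by
    rcases le_total B₁ B₂ with h | h
    · rw [hsplit (q := B₁) o2 h, hzero B₁ B₂ (by omega), add_zero]
    · rw [hsplit (q := B₂) o4 h, hzero B₂ B₁ (by omega), add_zero]
  rw [htop]
  have hbot : (∑ i ∈ Finset.Ioc A₁ c, φ (-i - 1) (ψ (i + n + m) v))
      - (∑ i ∈ Finset.Ioc A₂ c, φ (-i - 1) (ψ (i + n + m) v))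
      = (max 0 (-m) - max 0 (-n)) • (if n + m = 0 then v else 0) := by
    rcases le_total A₁ A₂ with h | h
    · rw [hsplit (q := A₂) h o3, hconst A₁ A₂ o3]
      rw [show ∀ x y : V, x + y - y = x from fun x y => by abel]
      rw [← natCast_zsmul]
      congr 1
      omega
    · rw [hsplit (q := A₁) h o1, hconst A₂ A₁ o1]
      rw [show ∀ x y : V, x - (y + x) = -y from fun x y => by abel]
      rw [← natCast_zsmul, ← neg_zsmul]
      congr 1
      omega
  rw [show ∀ x y z : V, x + y - (z + y) = x - z from fun x y z => by abel, hbot]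
  by_cases hnm : n + m = 0
  · rw [if_pos hnm, if_pos hnm, show max 0 (-m) - max 0 (-n) = n by omega]
    exact (Int.cast_smul_eq_zsmul ℂ n v).symm
  · rw [if_neg hnm, if_neg hnm, smul_zero]
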